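/- Let v, w : ℝⁿ → ℝⁿ be two bounded vector fields, both Lipschitz with constant L > 0, with flows Φ^v_t and Φ^w_t, and let μ, ν be finite positive measures on ℝⁿ, absolutely continuous with respect to Lebesgue measure and compactly supported, with μ(ℝⁿ) = ν(ℝⁿ) = C > 0 (not necessarily equal to 1). Then for every p ≥ 1 and t ≥ 0: W_p(Φ^v_t # μ, Φ^w_t # ν) ≤ e^{((p+1)/p) L t} · W_p(μ, ν) + μ(ℝⁿ)^{1/p} · (e^{Lt/p}(e^{Lt} − 1)/L) · ‖v − w‖_{C⁰}. -/

import Mathlib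

open MeasureTheory Set
open scoped RealInnerProductSpace

noncomputable section

abbrev En (n : ℕ) : Type := EuclideanSpace ℝ (Fin n)

/-- `𝓜`: probability measures on ℝⁿ with compact support, absolutely continuous
with respect to Lebesgue measure. -/
def MemM (n : ℕ) (μ : Measure (En n)) : Prop :=
  IsProbabilityMeasure μ ∧ μ ≪ (volume : Measure (En n)) ∧
    ∃ K : Set (En n), IsCompact K ∧ μ Kᶜ = 0

/-- A finite positive measure on ℝⁿ, absolutely continuous with respect to Lebesgue
measure and compactly supported. -/
def NiceMeasure (n : ℕ) (μ : Measure (En n)) : Prop :=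
  IsFiniteMeasure μ ∧ μ ≪ (volume : Measure (En n)) ∧
    ∃ K : Set (En n), IsCompact K ∧ μ Kᶜ = 0

/-- Wasserstein distance of exponent `p`, in the Monge (transport-map) formulation:
`W_p(μ,ν) = inf { (∫ ‖γ x - x‖^p dμ)^(1/p) : γ measurable, γ#μ = ν }`. -/
def Wp (n : ℕ) (p : ℝ) (μ ν : Measure (En n)) : ℝ :=
  sInf { c : ℝ | ∃ γ : En n → En n, Measurable γ ∧ Measure.map γ μ = ν ∧
    c = (∫ x, ‖γ x - x‖ ^ p ∂μ) ^ (1 / p) }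

/-- `Φ` is the flow of the vector field `v`: `Φ 0 x = x` and `∂ₜ Φ t x = v (Φ t x)`. -/
def IsFlow (n : ℕ) (v : En n → En n) (Φ : ℝ → En n → En n) : Prop :=
  (∀ x, Φ 0 x = x) ∧ ∀ x t, HasDerivAt (fun s => Φ s x) (v (Φ t x)) t

/-- Hypothesis (H): `v[μ]` is `C¹`, uniformly Lipschitz (constant `L`), uniformly
bounded (constant `M`), and `μ ↦ v[μ]` is Lipschitz from `(𝓜, W_p)` to `C⁰` with
constant `K`. -/
def HypH (n : ℕ) (p : ℝ) (v : Measure (En n) → En n → En n) (L M K : ℝ) : Prop :=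
  0 < L ∧ 0 < M ∧ 0 < K ∧
  (∀ μ, MemM n μ → ContDiff ℝ 1 (v μ)) ∧
  (∀ μ, MemM n μ → ∀ x y, ‖v μ x - v μ y‖ ≤ L * ‖x - y‖) ∧
  (∀ μ, MemM n μ → ∀ x, ‖v μ x‖ ≤ M) ∧
  (∀ μ ν, MemM n μ → MemM n ν → ∀ x, ‖v μ x - v ν x‖ ≤ K * Wp n p μ ν)

/-- Scheme 1 (semi-discrete in time Lagrangian scheme) with time step `Δt` on `[0,T]`:
`μ 0 = μ₀` and, on each interval `[iΔt, (i+1)Δt]`, `μ t` is the push-forward of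
`μ (iΔt)` by the flow of the frozen vector field `v[μ (iΔt)]`. -/
def Scheme1 (n : ℕ) (v : Measure (En n) → En n → En n) (μ₀ : Measure (En n))
    (Δt T : ℝ) (μ : ℝ → Measure (En n)) : Prop :=
  μ 0 = μ₀ ∧
  ∀ i : ℕ, ∀ t : ℝ, (i : ℝ) * Δt ≤ t → t ≤ ((i : ℝ) + 1) * Δt → t ≤ T →
    ∃ Φ : ℝ → En n → En n, IsFlow n (v (μ ((i : ℝ) * Δt))) Φ ∧
      μ t = Measure.map (Φ (t - (i : ℝ) * Δt)) (μ ((i : ℝ) * Δt))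

/-- Weak (distributional) solution of `∂ₜ μₜ + ∇·(v[μₜ] μₜ) = 0` on `[0,T]`:
for every test function `f ∈ C_c^∞([0,T] × ℝⁿ)`,
`∫_0^T ∫ (∂ₜ f + v[μₜ]·∇f) dμₜ dt = 0`. -/
def IsWeakSolution (n : ℕ) (v : Measure (En n) → En n → En n) (T : ℝ)
    (μ : ℝ → Measure (En n)) : Prop :=
  ∀ f : ℝ → En n → ℝ,
    ContDiff ℝ (⊤ : ℕ∞) (Function.uncurry f) →
    HasCompactSupport (Function.uncurry f) →
    (∫ t in Icc (0 : ℝ) T,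
      ∫ x, (deriv (fun s => f s x) t + ⟪v (μ t) x, gradient (fun y => f t y) x⟫)
        ∂(μ t)) = 0

/-- Continuity in time with respect to the Wasserstein distance `W_p`, on `[0,T]`. -/
def WpContinuousOn (n : ℕ) (p T : ℝ) (μ : ℝ → Measure (En n)) : Prop :=
  ∀ t ∈ Icc (0 : ℝ) T, ∀ ε > 0, ∃ δ > 0, ∀ s ∈ Icc (0 : ℝ) T, |s - t| < δ →
    Wp n p (μ s) (μ t) < ε

/-- The axis-parallel grid cell of side `Δx` indexed by `k : Fin n → ℤ`. -/
def gridCell (n : ℕ) (Δx : ℝ) (k : Fin n → ℤ) : Set (En n) :=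
  {x | ∀ i, (k i : ℝ) * Δx ≤ x i ∧ x i < ((k i : ℝ) + 1) * Δx}

/-- The index of the grid cell of side `Δx` containing `x`. -/
def gridIdx (n : ℕ) (Δx : ℝ) (x : En n) : Fin n → ℤ := fun i => ⌊x i / Δx⌋

/-- Grid discretization `G[μ]`: the measure which, on each cell `□` of the grid of
side `Δx`, has constant density `μ(□)/Δxⁿ` with respect to Lebesgue measure. -/
def gridDisc (n : ℕ) (Δx : ℝ) (μ : Measure (En n)) : Measure (En n) :=
  (volume : Measure (En n)).withDensity
    (fun x => μ (gridCell n Δx (gridIdx n Δx x)) / ENNReal.ofReal (Δx ^ n))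

/-- `L¹` distance between two measures, via their densities (Radon–Nikodym
derivatives) with respect to Lebesgue measure. -/
def L1dist (n : ℕ) (μ ν : Measure (En n)) : ℝ :=
  ∫ x, |(μ.rnDeriv (volume : Measure (En n)) x).toReal -
        (ν.rnDeriv (volume : Measure (En n)) x).toReal|

/-! A transport map `γ` from `μ` to `ν` is conjugated by the flows into the transport map
`Φʷₜ ∘ γ ∘ (Φᵛₜ)⁻¹` from `Φᵛₜ#μ` to `Φʷₜ#ν`. Grönwall's inequality bounds its displacement
`‖Φʷₜ(γ x) - Φᵛₜ(x)‖` by `e^{Lt} ‖γ x - x‖ + ‖v - w‖_{C⁰} (e^{Lt} - 1) / L`, and Minkowski's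
inequality in `L^p(μ)` turns this into `e^{Lt}` times the cost of `γ` plus `μ(ℝⁿ)^{1/p}` times
the constant. Taking the infimum over `γ` gives the estimate, even with the smaller constants
`e^{Lt}` and `(e^{Lt} - 1) / L`. -/

open scoped NNReal ENNReal

section LpBounds

variable {α E F : Type*} [MeasurableSpace α] [NormedAddCommGroup E] [NormedAddCommGroup F]
  {μ : Measure α} {p A B : ℝ}

theorem integral_norm_rpow_rpow_eq_toReal_eLpNorm' {f : α → E}
    (hf : AEStronglyMeasurable f μ) (hp : 0 < p) :
    (∫ x, ‖f x‖ ^ p ∂μ) ^ (1 / p) = (eLpNorm' f p μ).toReal := by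
  rw [integral_eq_lintegral_of_nonneg_ae (ae_of_all _ fun x => by positivity)
    (hf.norm.aemeasurable.pow_const p).aestronglyMeasurable, eLpNorm'_eq_lintegral_enorm,
    ENNReal.toReal_rpow]
  congr 2
  refine lintegral_congr fun x => ?_
  rw [← ENNReal.ofReal_rpow_of_nonneg (norm_nonneg _) hp.le, ofReal_norm]

theorem eLpNorm'_le_of_norm_le_mul_add {f : α → E} {g : α → F} (hp : 1 ≤ p) (hA : 0 ≤ A)
    (hB : 0 ≤ B) (hg : AEStronglyMeasurable g μ) (hfg : ∀ x, ‖f x‖ ≤ A * ‖g x‖ + B) :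
    eLpNorm' f p μ ≤ ENNReal.ofReal A * eLpNorm' g p μ + ENNReal.ofReal B * μ univ ^ (1 / p) := by
  have hp0 : 0 < p := zero_lt_one.trans_le hp
  calc eLpNorm' f p μ ≤ eLpNorm' ((A • fun x => ‖g x‖) + fun _ => B) p μ :=
        eLpNorm'_mono_ae hp0.le (ae_of_all _ fun x => by
          simpa [abs_of_nonneg ((norm_nonneg _).trans (hfg x))] using hfg x)
    _ ≤ eLpNorm' (A • fun x => ‖g x‖) p μ + eLpNorm' (fun _ => B) p μ :=
        eLpNorm'_add_le (hg.norm.const_smul A) aestronglyMeasurable_const hp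
    _ = ENNReal.ofReal A * eLpNorm' g p μ + ENNReal.ofReal B * μ univ ^ (1 / p) := by
        rw [eLpNorm'_const _ hp0, eLpNorm'_const_smul _ hp0, Real.enorm_of_nonneg hA,
          Real.enorm_of_nonneg hB, eLpNorm'_norm]

/-- The reverse bound `hgf` is what makes `eLpNorm' g` finite whenever `eLpNorm' f` is; without it
`toReal` would send an infinite right-hand side to `0`. -/
theorem toReal_eLpNorm'_le_of_norm_le_mul_add [IsFiniteMeasure μ] {f : α → E} {g : α → F}
    {A' B' : ℝ} (hp : 1 ≤ p) (hA : 0 ≤ A) (hB : 0 ≤ B) (hA' : 0 ≤ A') (hB' : 0 ≤ B')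
    (hf : AEStronglyMeasurable f μ) (hg : AEStronglyMeasurable g μ)
    (hfg : ∀ x, ‖f x‖ ≤ A * ‖g x‖ + B) (hgf : ∀ x, ‖g x‖ ≤ A' * ‖f x‖ + B') :
    (eLpNorm' f p μ).toReal ≤
      A * (eLpNorm' g p μ).toReal + B * (μ univ).toReal ^ (1 / p) := by
  rcases eq_or_ne (eLpNorm' f p μ) ∞ with hf_top | hf_fin
  · rw [hf_top, ENNReal.toReal_top]
    positivity
  have hg_fin : eLpNorm' g p μ ≠ ∞ :=
    ne_top_of_le_ne_top (by finiteness) (eLpNorm'_le_of_norm_le_mul_add hp hA' hB' hf hgf)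
  have h := ENNReal.toReal_mono (by finiteness) (eLpNorm'_le_of_norm_le_mul_add hp hA hB hg hfg)
  rwa [ENNReal.toReal_add (by finiteness) (by finiteness), ENNReal.toReal_mul, ENNReal.toReal_mul,
    ENNReal.toReal_ofReal hA, ENNReal.toReal_ofReal hB, ← ENNReal.toReal_rpow] at h

end LpBounds

theorem gronwallBound_eq_mul_exp_add (δ K ε x : ℝ) :
    gronwallBound δ K ε x = δ * Real.exp (K * x) + gronwallBound 0 K ε x := by
  by_cases hK : K = 0
  · simp [gronwallBound_K0, hK]
  · simp [gronwallBound_of_K_ne_0 hK]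

namespace IsFlow

variable {n : ℕ} {v w : En n → En n} {Φ Φv Φw : ℝ → En n → En n} {K : ℝ≥0}

theorem neg (hΦ : IsFlow n v Φ) : IsFlow n (-v) fun s => Φ (-s) :=
  ⟨fun x => by simpa using hΦ.1 x,
    fun x t => ((hΦ.2 x (-t)).scomp t (hasDerivAt_neg t)).congr_deriv (by simp)⟩

theorem continuous_curve (hΦ : IsFlow n v Φ) (x : En n) : Continuous fun s => Φ s x :=
  continuous_iff_continuousAt.2 fun s => (hΦ.2 x s).continuousAt

theorem dist_le_gronwallBound (hw : LipschitzWith K w) (hΦv : IsFlow n v Φv)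
    (hΦw : IsFlow n w Φw) {D : ℝ} (hD : ∀ x, dist (v x) (w x) ≤ D) {t : ℝ} (ht : 0 ≤ t)
    (a b : En n) : dist (Φv t a) (Φw t b) ≤ gronwallBound (dist a b) K D t := by
  simpa using dist_le_of_approx_trajectories_ODE (v := fun _ => w) (fun _ => hw)
    (hΦv.continuous_curve a).continuousOn (fun s _ => (hΦv.2 a s).hasDerivWithinAt)
    (fun s _ => hD _) (hΦw.continuous_curve b).continuousOn
    (fun s _ => (hΦw.2 b s).hasDerivWithinAt) (fun s _ => (dist_self _).le)
    (by rw [hΦv.1, hΦw.1]) t ⟨ht, le_rfl⟩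

theorem dist_le_exp_mul_add (hw : LipschitzWith K w) (hΦv : IsFlow n v Φv)
    (hΦw : IsFlow n w Φw) {D : ℝ} (hD : ∀ x, dist (v x) (w x) ≤ D) {t : ℝ} (ht : 0 ≤ t)
    (a b : En n) :
    dist (Φv t a) (Φw t b) ≤ Real.exp (K * t) * dist a b + gronwallBound 0 K D t := by
  rw [mul_comm, ← gronwallBound_eq_mul_exp_add]
  exact hΦv.dist_le_gronwallBound hw hΦw hD ht a b

theorem lipschitzWith (hv : LipschitzWith K v) (hΦ : IsFlow n v Φ) {t : ℝ} (ht : 0 ≤ t) :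
    LipschitzWith ⟨Real.exp (K * t), (Real.exp_pos _).le⟩ (Φ t) :=
  LipschitzWith.of_dist_le_mul fun a b => by
    have h := hΦ.dist_le_gronwallBound hv hΦ (fun x => (dist_self (v x)).le) ht a b
    rwa [gronwallBound_ε0, mul_comm] at h

theorem continuous (hv : LipschitzWith K v) (hΦ : IsFlow n v Φ) (t : ℝ) : Continuous (Φ t) := by
  rcases le_total 0 t with ht | ht
  · exact (hΦ.lipschitzWith hv ht).continuous
  · simpa using (hΦ.neg.lipschitzWith hv.neg (neg_nonneg.2 ht)).continuous

theorem leftInverse (hv : LipschitzWith K v) (hΦ : IsFlow n v Φ) (t : ℝ) :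
    Function.LeftInverse (Φ (-t)) (Φ t) := by
  wlog ht : 0 ≤ t generalizing v Φ t
  · simpa using this hv.neg hΦ.neg (-t) (by linarith)
  intro x
  -- both sides solve `y' = -v y` with value `Φ t x` at time `0`
  have hf : ∀ s, HasDerivAt (fun s => Φ (t - s) x) ((-v) (Φ (t - s) x)) s := fun s =>
    ((hΦ.2 x (t - s)).scomp s ((hasDerivAt_id s).const_sub t)).congr_deriv (by simp)
  have key := ODE_solution_unique (v := fun _ => -v) (fun _ => hv.neg)
    (fun s _ => (hf s).continuousAt.continuousWithinAt) (fun s _ => (hf s).hasDerivWithinAt)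
    (hΦ.neg.continuous_curve (Φ t x)).continuousOn
    (fun s _ => (hΦ.neg.2 (Φ t x) s).hasDerivWithinAt) (by simp [hΦ.1]) (right_mem_Icc.2 ht)
  simpa [hΦ.1] using key.symm

theorem dist_le_exp_mul_dist_flow_add {K' : ℝ≥0} (hv : LipschitzWith K' v)
    (hw : LipschitzWith K w) (hΦv : IsFlow n v Φv) (hΦw : IsFlow n w Φw) {D : ℝ}
    (hD : ∀ x, dist (v x) (w x) ≤ D) {t : ℝ} (ht : 0 ≤ t) (a b : En n) :
    dist a b ≤ Real.exp (K * t) * dist (Φv t a) (Φw t b) + gronwallBound 0 K D t := by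
  have h := hΦv.neg.dist_le_exp_mul_add hw.neg hΦw.neg (fun y => by simpa using hD y) ht
    (Φv t a) (Φw t b)
  rwa [hΦv.leftInverse hv t a, hΦw.leftInverse hw t b] at h

end IsFlow

section Wasserstein

variable {n : ℕ} {p : ℝ}

def transportCost (p : ℝ) (μ : Measure (En n)) (γ : En n → En n) : ℝ :=
  (∫ x, ‖γ x - x‖ ^ p ∂μ) ^ (1 / p)

theorem transportCost_nonneg (μ : Measure (En n)) (γ : En n → En n) :
    0 ≤ transportCost p μ γ :=
  Real.rpow_nonneg (integral_nonneg fun _ => Real.rpow_nonneg (norm_nonneg _) _) _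

theorem transportCost_eq_toReal_eLpNorm' {μ : Measure (En n)} {γ : En n → En n} (hp : 0 < p)
    (hγ : Measurable γ) : transportCost p μ γ = (eLpNorm' (fun x => γ x - x) p μ).toReal :=
  integral_norm_rpow_rpow_eq_toReal_eLpNorm' (hγ.sub measurable_id).aestronglyMeasurable hp

theorem transportCost_map {μ : Measure (En n)} {f γ : En n → En n} (hp : 0 < p)
    (hf : Measurable f) (hγ : Measurable γ) :
    transportCost p (μ.map f) γ = (eLpNorm' (fun x => γ (f x) - f x) p μ).toReal := by
  rw [transportCost, integral_map (f := fun y => ‖γ y - y‖ ^ p) hf.aemeasurable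
    ((hγ.sub measurable_id).norm.pow_const p).aestronglyMeasurable]
  exact integral_norm_rpow_rpow_eq_toReal_eLpNorm'
    ((hγ.comp hf).sub hf).aestronglyMeasurable hp

theorem Wp_nonneg (μ ν : Measure (En n)) : 0 ≤ Wp n p μ ν :=
  Real.sInf_nonneg <| by
    rintro _ ⟨γ, -, -, rfl⟩
    exact transportCost_nonneg μ γ

theorem Wp_le_transportCost {μ ν : Measure (En n)} {γ : En n → En n} (hγ : Measurable γ)
    (hγν : μ.map γ = ν) : Wp n p μ ν ≤ transportCost p μ γ :=
  csInf_le ⟨0, by rintro _ ⟨γ, -, -, rfl⟩; exact transportCost_nonneg μ γ⟩ ⟨γ, hγ, hγν, rfl⟩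

/-- `hexists` guards against the junk value `Wp n p μ ν = sInf ∅ = 0` when no map pushes `μ` to
`ν` while some map pushes `μ'` to `ν'`. -/
theorem Wp_le_mul_add_of_transport {μ ν μ' ν' : Measure (En n)} {A B : ℝ} (hA : 0 ≤ A)
    (hB : 0 ≤ B)
    (hexists : ∀ γ', Measurable γ' → μ'.map γ' = ν' → ∃ γ, Measurable γ ∧ μ.map γ = ν)
    (hcost : ∀ γ, Measurable γ → μ.map γ = ν → Wp n p μ' ν' ≤ A * transportCost p μ γ + B) :
    Wp n p μ' ν' ≤ A * Wp n p μ ν + B := by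
  by_cases h : ∃ γ', Measurable γ' ∧ μ'.map γ' = ν'
  · obtain ⟨γ', hγ', hγ'ν'⟩ := h
    obtain ⟨γ, hγ, hγν⟩ := hexists γ' hγ' hγ'ν'
    rw [← sub_le_iff_le_add, ← smul_eq_mul, Wp.eq_1 n p μ ν, ← Real.sInf_smul_of_nonneg hA]
    refine le_csInf (Set.Nonempty.smul_set ⟨_, γ, hγ, hγν, rfl⟩) ?_
    rintro _ ⟨_, ⟨γ, hγ, hγν, rfl⟩, rfl⟩
    exact sub_le_iff_le_add.2 (hcost γ hγ hγν)
  · have hempty : {c : ℝ | ∃ γ : En n → En n, Measurable γ ∧ μ'.map γ = ν' ∧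
        c = (∫ x, ‖γ x - x‖ ^ p ∂μ') ^ (1 / p)} = ∅ :=
      eq_empty_of_forall_notMem fun _ ⟨γ', hγ', hγ'ν', _⟩ => h ⟨γ', hγ', hγ'ν'⟩
    rw [Wp, hempty, Real.sInf_empty]
    exact add_nonneg (mul_nonneg hA (Wp_nonneg μ ν)) hB

theorem Wp_map_flow_le {μ ν : Measure (En n)} [IsFiniteMeasure μ]
    {v w : En n → En n} {Φv Φw : ℝ → En n → En n} {K' K : ℝ≥0} {D t : ℝ} (hp : 1 ≤ p)
    (hv : LipschitzWith K' v) (hw : LipschitzWith K w) (hΦv : IsFlow n v Φv)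
    (hΦw : IsFlow n w Φw) (hD : ∀ x, dist (v x) (w x) ≤ D) (ht : 0 ≤ t) :
    Wp n p (μ.map (Φv t)) (ν.map (Φw t)) ≤
      Real.exp (K * t) * Wp n p μ ν + gronwallBound 0 K D t * (μ univ).toReal ^ (1 / p) := by
  have hp0 : 0 < p := zero_lt_one.trans_le hp
  have hΦvt := (hΦv.continuous hv t).measurable
  have hΦvt' := (hΦv.continuous hv (-t)).measurable
  have hΦwt := (hΦw.continuous hw t).measurable
  have hΦwt' := (hΦw.continuous hw (-t)).measurable
  have hinv : ∀ x, Φv (-t) (Φv t x) = x := hΦv.leftInverse hv t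
  have hB : 0 ≤ gronwallBound 0 K D t := by
    simpa [gronwallBound_x0] using
      gronwallBound_mono le_rfl (dist_nonneg.trans (hD 0)) K.2 ht
  refine Wp_le_mul_add_of_transport (Real.exp_pos _).le (by positivity) (fun γ' hγ' hγ'ν' => ?_)
    (fun γ hγ hγν => ?_)
  · refine ⟨Φw (-t) ∘ γ' ∘ Φv t, hΦwt'.comp (hγ'.comp hΦvt), ?_⟩
    rw [← Measure.map_map hΦwt' (hγ'.comp hΦvt), ← Measure.map_map hγ' hΦvt, hγ'ν',
      Measure.map_map hΦwt' hΦwt, (hΦw.leftInverse hw t).comp_eq_id, Measure.map_id]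
  have hT : Measurable (Φw t ∘ γ ∘ Φv (-t)) := hΦwt.comp (hγ.comp hΦvt')
  have hTν : (μ.map (Φv t)).map (Φw t ∘ γ ∘ Φv (-t)) = ν.map (Φw t) := by
    rw [Measure.map_map hT hΦvt, ← hγν, Measure.map_map hΦwt hγ]
    congr 1
    funext x
    simp [hinv]
  refine (Wp_le_transportCost hT hTν).trans ?_
  rw [transportCost_map hp0 hΦvt hT, transportCost_eq_toReal_eLpNorm' hp0 hγ]
  simp only [Function.comp_apply, hinv]
  have hA := (Real.exp_pos (K * t)).le
  refine toReal_eLpNorm'_le_of_norm_le_mul_add hp hA hB hA hB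
    ((hΦwt.comp hγ).sub hΦvt).aestronglyMeasurable (hγ.sub measurable_id).aestronglyMeasurable
    (fun x => ?_) (fun x => ?_)
  · simpa only [dist_comm (Φv t x), dist_comm x, dist_eq_norm] using
      hΦv.dist_le_exp_mul_add hw hΦw hD ht x (γ x)
  · simpa only [dist_comm (Φv t x), dist_comm x, dist_eq_norm] using
      hΦv.dist_le_exp_mul_dist_flow_add hv hw hΦw hD ht x (γ x)

end Wasserstein

theorem stmt6_general (n : ℕ) (p L t : ℝ) (hp : 1 ≤ p) (hL : 0 < L) (ht : 0 ≤ t)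
    (v w : En n → En n)
    (hvB : ∃ C : ℝ, ∀ x, ‖v x‖ ≤ C) (hwB : ∃ C : ℝ, ∀ x, ‖w x‖ ≤ C)
    (hvL : ∀ x y, ‖v x - v y‖ ≤ L * ‖x - y‖)
    (hwL : ∀ x y, ‖w x - w y‖ ≤ L * ‖x - y‖)
    (Φv Φw : ℝ → En n → En n) (hΦv : IsFlow n v Φv) (hΦw : IsFlow n w Φw)
    (μ ν : Measure (En n)) (hμ : NiceMeasure n μ)
    (C : ENNReal) :
    Wp n p (Measure.map (Φv t) μ) (Measure.map (Φw t) ν) ≤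
      Real.exp ((p + 1) / p * L * t) * Wp n p μ ν +
        (μ Set.univ).toReal ^ (1 / p) *
          (Real.exp (L * t / p) * (Real.exp (L * t) - 1) / L) *
            (⨆ x, ‖v x - w x‖) := by
  have := hμ.1
  obtain ⟨Cv, hCv⟩ := hvB
  obtain ⟨Cw, hCw⟩ := hwB
  have hD : ∀ x, dist (v x) (w x) ≤ ⨆ x, ‖v x - w x‖ := fun x => by
    rw [dist_eq_norm]
    refine le_ciSup (f := fun x => ‖v x - w x‖) ⟨Cv + Cw, ?_⟩ x
    rintro _ ⟨y, rfl⟩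
    exact norm_sub_le_of_le (hCv y) (hCw y)
  have hflow := Wp_map_flow_le (μ := μ) (ν := ν) hp
    (LipschitzWith.of_dist_le' (by simpa [dist_eq_norm] using hvL))
    (LipschitzWith.of_dist_le' (by simpa [dist_eq_norm] using hwL)) hΦv hΦw hD ht
  simp only [Real.coe_toNNReal _ hL.le, gronwallBound_of_K_ne_0 hL.ne', zero_mul,
    zero_add] at hflow
  have hE : 0 ≤ Real.exp (L * t) - 1 := sub_nonneg.2 (Real.one_le_exp (by positivity))
  have hD0 : 0 ≤ ⨆ x, ‖v x - w x‖ := dist_nonneg.trans (hD 0)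
  refine hflow.trans (add_le_add ?_ ((le_mul_of_one_le_left ?_
    (Real.one_le_exp (by positivity : 0 ≤ L * t / p))).trans_eq (by ring)))
  · refine mul_le_mul_of_nonneg_right (Real.exp_le_exp.2 ?_) (Wp_nonneg μ ν)
    rw [mul_assoc]
    exact le_mul_of_one_le_left (by positivity) (by rw [le_div_iff₀ (by linarith)]; linarith)
  · exact mul_nonneg (mul_nonneg (div_nonneg hD0 hL.le) hE) (by positivity)

/-- As `stmt5` but for finite positive measures with equal total mass `C > 0`
(not necessarily `1`): the second term carries the factor `μ(ℝⁿ)^(1/p)`. -/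
theorem stmt6 (n : ℕ) (p L t : ℝ) (hp : 1 ≤ p) (hL : 0 < L) (ht : 0 ≤ t)
    (v w : En n → En n)
    (hvB : ∃ C : ℝ, ∀ x, ‖v x‖ ≤ C) (hwB : ∃ C : ℝ, ∀ x, ‖w x‖ ≤ C)
    (hvL : ∀ x y, ‖v x - v y‖ ≤ L * ‖x - y‖)
    (hwL : ∀ x y, ‖w x - w y‖ ≤ L * ‖x - y‖)
    (Φv Φw : ℝ → En n → En n) (hΦv : IsFlow n v Φv) (hΦw : IsFlow n w Φw)
    (μ ν : Measure (En n)) (hμ : NiceMeasure n μ) (hν : NiceMeasure n ν)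
    (C : ENNReal) (hC : C ≠ 0)
    (hmassμ : μ Set.univ = C) (hmassν : ν Set.univ = C) :
    Wp n p (Measure.map (Φv t) μ) (Measure.map (Φw t) ν) ≤
      Real.exp ((p + 1) / p * L * t) * Wp n p μ ν +
        (μ Set.univ).toReal ^ (1 / p) *
          (Real.exp (L * t / p) * (Real.exp (L * t) - 1) / L) *
            (⨆ x, ‖v x - w x‖) :=
  stmt6_general n p L t hp hL ht v w hvB hwB hvL hwL Φv Φw hΦv hΦw μ ν hμ C

end
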